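/- arXiv:1712.10043 — 3 statements merged into one kernel-verified Lean document; each statement's English description precedes it below -/
import Mathlib

section
/- Let 𝒳 and 𝒴 be nonempty finite sets. Let p_test be a probability distribution on 𝒳 with p_test(x) > 0 for every x, let V be a finite index set, and for each v ∈ V let p_gen_v be a probability distribution on 𝒳 (the generalization distribution for view v), φ_v : 𝒳 × 𝒴 → ℝ^{d_v} a feature map, θ_v ∈ ℝ^{d_v} a parameter vector, and c_v ∈ ℝ^{d_v} a target moment vector. Define the conditional distribution P̂(y|x) = exp(∑_{v∈V} (p_gen_v(x)/p_test(x)) θ_v·φ_v(x,y)) / ∑_{y'∈𝒴} exp(∑_{v∈V} (p_gen_v(x)/p_test(x)) θ_v·φ_v(x,y')). If P̂ satisfies the moment constraints ∑_{x∈𝒳} p_gen_v(x) ∑_{y∈𝒴} P̂(y|x) φ_v(x,y) = c_v for every v ∈ V, then for every conditional label distribution Q satisfying the same constraints ∑_{x∈𝒳} p_gen_v(x) ∑_{y∈𝒴} Q(y|x) φ_v(x,y) = c_v for every v ∈ V, the expected testing conditional entropy satisfies ∑_{x} p_test(x) ∑_{y} Q(y|x)(−log Q(y|x)) ≤ ∑_{x}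 p_test(x) ∑_{y} P̂(y|x)(−log P̂(y|x)). That is, the generalized robust covariate shift classifier (the maximizer of expected testing conditional entropy subject to generalized moment constraints) has the parametric form P̂_θ(y|x) ∝ exp(∑_v (p_gen_v(x)/p_test(x)) θ_v·φ_v(x,y)). -/
/-!
`P̂(·|x)` is the softmax of a score whose `p_test`-weighted expectation under any conditional
distribution is a linear function of that distribution's generalized moments (the factor
`p_gen_v(x) / p_test(x)` is exactly what cancels `p_test`). Hence the cross-entropy of `Q` against
`P̂` equals the entropy of `P̂` whenever `Q` satisfies the moment constraints, and Gibbs'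
inequality bounds the entropy of `Q` by that cross-entropy.
-/

open Finset Real

section Softmax

variable {Y : Type*} [Fintype Y]

noncomputable def softmax (f : Y → ℝ) (y : Y) : ℝ := exp (f y) / ∑ y', exp (f y')

variable [Nonempty Y] (f : Y → ℝ)

lemma sum_exp_pos : 0 < ∑ y, exp (f y) :=
  sum_pos (fun y _ => exp_pos (f y)) univ_nonempty

lemma softmax_pos (y : Y) : 0 < softmax f y :=
  div_pos (exp_pos _) (sum_exp_pos f)

lemma sum_softmax : ∑ y, softmax f y = 1 := by
  simp only [softmax, ← sum_div]; exact div_self (sum_exp_pos f).ne'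

lemma log_softmax (y : Y) : log (softmax f y) = f y - log (∑ y', exp (f y')) := by
  rw [softmax, log_div (exp_ne_zero _) (sum_exp_pos f).ne', log_exp]

lemma sum_mul_log_softmax {q : Y → ℝ} (hq : ∑ y, q y = 1) :
    ∑ y, q y * log (softmax f y) = ∑ y, q y * f y - log (∑ y, exp (f y)) := by
  simp_rw [log_softmax, mul_sub, sum_sub_distrib, ← sum_mul, hq, one_mul]

end Softmax

lemma mul_log_sub_mul_log_le_sub {p q : ℝ} (hp : 0 < p) (hq : 0 ≤ q) :
    q * log p - q * log q ≤ p - q := by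
  rcases hq.eq_or_lt with rfl | hq
  · simpa using hp.le
  calc q * log p - q * log q = q * log (p / q) := by rw [log_div hp.ne' hq.ne']; ring
    _ ≤ q * (p / q - 1) := by gcongr; exact log_le_sub_one_of_pos (div_pos hp hq)
    _ = p - q := by field_simp

theorem sum_mul_log_le_sum_mul_log {ι : Type*} [Fintype ι] {p q : ι → ℝ}
    (hp : ∀ i, 0 < p i) (hq : ∀ i, 0 ≤ q i) (hsum : ∑ i, q i = ∑ i, p i) :
    ∑ i, q i * log (p i) ≤ ∑ i, q i * log (q i) := by
  have := sum_le_sum fun i (_ : i ∈ univ) => mul_log_sub_mul_log_le_sub (hp i) (hq i)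
  rw [sum_sub_distrib, sum_sub_distrib, hsum] at this
  linarith

theorem weighted_entropy_le_of_eq_softmax_score {X Y : Type*} [Fintype X] [Fintype Y] [Nonempty Y]
    (w : X → ℝ) (hw : ∀ x, 0 ≤ w x) (f : X → Y → ℝ) (Q : X → Y → ℝ)
    (hQ_nonneg : ∀ x y, 0 ≤ Q x y) (hQ_sum : ∀ x, ∑ y, Q x y = 1)
    (hscore : ∑ x, w x * ∑ y, Q x y * f x y = ∑ x, w x * ∑ y, softmax (f x) y * f x y) :
    ∑ x, w x * ∑ y, Q x y * (-log (Q x y)) ≤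
      ∑ x, w x * ∑ y, softmax (f x) y * (-log (softmax (f x) y)) := by
  have cross : ∀ R : X → Y → ℝ, (∀ x, ∑ y, R x y = 1) →
      ∑ x, w x * ∑ y, R x y * log (softmax (f x) y) =
        ∑ x, w x * ∑ y, R x y * f x y - ∑ x, w x * log (∑ y, exp (f x y)) := fun R hR => by
    simp_rw [sum_mul_log_softmax _ (hR _), mul_sub, sum_sub_distrib]
  have gibbs : ∑ x, w x * ∑ y, Q x y * log (softmax (f x) y) ≤
      ∑ x, w x * ∑ y, Q x y * log (Q x y) :=
    sum_le_sum fun x _ => mul_le_mul_of_nonneg_left (sum_mul_log_le_sum_mul_log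
      (softmax_pos (f x)) (hQ_nonneg x) (by rw [hQ_sum, sum_softmax])) (hw x)
  rw [cross Q hQ_sum, hscore, ← cross _ fun x => sum_softmax (f x)] at gibbs
  simp only [mul_neg, sum_neg_distrib]
  linarith

theorem sum_mul_sum_mul_score_eq_sum_moment {X Y V : Type*} [Fintype X] [Fintype Y] [Fintype V]
    {d : V → ℕ} (ptest : X → ℝ) (htest : ∀ x, ptest x ≠ 0) (pgen : V → X → ℝ)
    (φ : (v : V) → X → Y → Fin (d v) → ℝ) (θ : (v : V) → Fin (d v) → ℝ) (R : X → Y → ℝ) :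
    ∑ x, ptest x * ∑ y, R x y * ∑ v, (pgen v x / ptest x) * ∑ i, θ v i * φ v x y i =
      ∑ v, ∑ i, θ v i * ∑ x, pgen v x * ∑ y, R x y * φ v x y i := by
  have pointwise : ∀ x, ptest x * ∑ y, R x y * ∑ v, (pgen v x / ptest x) * ∑ i, θ v i * φ v x y i
      = ∑ v, ∑ i, θ v i * (pgen v x * ∑ y, R x y * φ v x y i) := fun x => by
    simp only [mul_sum]
    rw [sum_comm]
    refine sum_congr rfl fun v _ => ?_
    rw [sum_comm]
    refine sum_congr rfl fun i _ => sum_congr rfl fun y _ => ?_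
    field_simp [htest x]
  rw [sum_congr rfl fun x _ => pointwise x, sum_comm]
  refine sum_congr rfl fun v _ => ?_
  rw [sum_comm]
  simp only [mul_sum]

theorem generalized_robust_covariate_shift_parametric_form_general
    {X Y V : Type*} [Fintype X] [Fintype Y] [Fintype V]
    [Nonempty Y]
    (ptest : X → ℝ) (htest_pos : ∀ x, 0 < ptest x)
    (d : V → ℕ)
    (pgen : V → X → ℝ)
    (φ : (v : V) → X → Y → Fin (d v) → ℝ)
    (θ : (v : V) → Fin (d v) → ℝ)
    (c : (v : V) → Fin (d v) → ℝ)
    -- the parametric-form predictor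
    (Phat : X → Y → ℝ)
    (hPhat : ∀ x y, Phat x y =
      Real.exp (∑ v, (pgen v x / ptest x) * ∑ i, θ v i * φ v x y i) /
        ∑ y', Real.exp (∑ v, (pgen v x / ptest x) * ∑ i, θ v i * φ v x y' i))
    -- P̂ satisfies the generalized moment constraints
    (hPhat_constraints : ∀ (v : V) (i : Fin (d v)),
      ∑ x, pgen v x * ∑ y, Phat x y * φ v x y i = c v i)
    -- an arbitrary conditional label distribution satisfying the same constraints
    (Q : X → Y → ℝ)
    (hQ_nonneg : ∀ x y, 0 ≤ Q x y) (hQ_sum : ∀ x, ∑ y, Q x y = 1)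
    (hQ_constraints : ∀ (v : V) (i : Fin (d v)),
      ∑ x, pgen v x * ∑ y, Q x y * φ v x y i = c v i) :
    ∑ x, ptest x * ∑ y, Q x y * (-Real.log (Q x y)) ≤
      ∑ x, ptest x * ∑ y, Phat x y * (-Real.log (Phat x y)) := by
  have hPhat_softmax : Phat = fun x =>
      softmax fun y => ∑ v, (pgen v x / ptest x) * ∑ i, θ v i * φ v x y i :=
    funext fun x => funext (hPhat x)
  have htest : ∀ x, ptest x ≠ 0 := fun x => (htest_pos x).ne'
  subst hPhat_softmax
  refine weighted_entropy_le_of_eq_softmax_score ptest (fun x => (htest_pos x).le) _ Q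
    hQ_nonneg hQ_sum ?_
  rw [sum_mul_sum_mul_score_eq_sum_moment ptest htest,
    sum_mul_sum_mul_score_eq_sum_moment ptest htest]
  simp only [hQ_constraints, hPhat_constraints]

/-- Theorem 1 of the paper: the generalized robust covariate
shift classifier — the maximizer of expected testing conditional entropy
subject to generalized view-based moment constraints — has the parametric form
`P̂(y|x) ∝ exp(∑_v (p_gen_v(x)/p_test(x)) θ_v·φ_v(x,y))`: any conditional
label distribution `Q` satisfying the same moment constraints has expected
testing conditional entropy at most that of `P̂`. -/
theorem generalized_robust_covariate_shift_parametric_form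
    {X Y V : Type*} [Fintype X] [Fintype Y] [Fintype V]
    [Nonempty X] [Nonempty Y]
    (ptest : X → ℝ) (htest_pos : ∀ x, 0 < ptest x) (htest_sum : ∑ x, ptest x = 1)
    (d : V → ℕ)
    (pgen : V → X → ℝ)
    (hgen_nonneg : ∀ v x, 0 ≤ pgen v x) (hgen_sum : ∀ v, ∑ x, pgen v x = 1)
    (φ : (v : V) → X → Y → Fin (d v) → ℝ)
    (θ : (v : V) → Fin (d v) → ℝ)
    (c : (v : V) → Fin (d v) → ℝ)
    -- the parametric-form predictor
    (Phat : X → Y → ℝ)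
    (hPhat : ∀ x y, Phat x y =
      Real.exp (∑ v, (pgen v x / ptest x) * ∑ i, θ v i * φ v x y i) /
        ∑ y', Real.exp (∑ v, (pgen v x / ptest x) * ∑ i, θ v i * φ v x y' i))
    -- P̂ satisfies the generalized moment constraints
    (hPhat_constraints : ∀ (v : V) (i : Fin (d v)),
      ∑ x, pgen v x * ∑ y, Phat x y * φ v x y i = c v i)
    -- an arbitrary conditional label distribution satisfying the same constraints
    (Q : X → Y → ℝ)
    (hQ_nonneg : ∀ x y, 0 ≤ Q x y) (hQ_sum : ∀ x, ∑ y, Q x y = 1)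
    (hQ_constraints : ∀ (v : V) (i : Fin (d v)),
      ∑ x, pgen v x * ∑ y, Q x y * φ v x y i = c v i) :
    ∑ x, ptest x * ∑ y, Q x y * (-Real.log (Q x y)) ≤
      ∑ x, ptest x * ∑ y, Phat x y * (-Real.log (Phat x y)) :=
  generalized_robust_covariate_shift_parametric_form_general ptest htest_pos d pgen φ θ c Phat hPhat
    hPhat_constraints Q hQ_nonneg hQ_sum hQ_constraints
end

section
/- Under the setting and positivity assumptions of the robust multiview covariate shift classifier (views V_g, V_o, projections π_v, features φ_v, ratios ρ_v(x) = p_train(π_v x)/p_test(π_v x), ρ(x) = p_train(x)/p_test(x), r_v(x) = ρ_v(x)/ρ(x)), define Z_θ(x) = ∑_{y'∈𝒴} exp(∑_{v∈V_g} ρ_v(x) θ_v·φ_v(π_v x, y') + ρ(x) ∑_{v'∈V_o} θ_{v'}·φ_{v'}(π_{v'} x, y')) and P̂_θ(y|x) = exp(∑_{v∈V_g} ρ_v(x) θ_v·φ_v(π_v x, y) + ρ(x) ∑_{v'∈V_o} θ_{v'}·φ_{v'}(π_{v'} x, y)) / Z_θ(x). Then for every parameter vector θ = (θ_v)_{v∈V_g∪V_o}: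 ∑_{x,y} p_train(x) p(y|x) [∑_{v∈V_g} r_v(x) θ_v·φ_v(π_v x, y) + ∑_{v'∈V_o} θ_{v'}·φ_{v'}(π_{v'} x, y)] − ∑_x p_test(x) log Z_θ(x) = ∑_{x,y} p_test(x) p(y|x) log P̂_θ(y|x). Consequently, the set of parameters maximizing the left-hand (Lagrangian dual) objective equals the set of parameters maximizing the conditional log-likelihood of the testing distribution under P̂_θ; i.e., the parameters of the robust multiview covariate shift classifier are obtained through implicitly maximizing the conditional likelihood of testing data. -/
/-! Since `log P̂_θ(y|x) = s_θ(x,y) - log Z_θ(x)` and `∑_y p(y|x) = 1`, the test log-likelihood is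
`∑ p_test(x) p(y|x) s_θ(x,y) - ∑ p_test(x) log Z_θ(x)`. The density ratios are exactly what turns
`p_test(x) · s_θ(x,y)` into `p_train(x)` times the feature term of the dual, since
`p_test ρ = p_train` and `p_test ρ_v = p_train r_v`. -/

open Finset Real

theorem log_exp_div_sum_exp {Y : Type*} [Fintype Y] [Nonempty Y] (s : Y → ℝ) (y : Y) :
    log (exp (s y) / ∑ y', exp (s y')) = s y - log (∑ y', exp (s y')) := by
  have hZ : 0 < ∑ y', exp (s y') := sum_pos (fun y' _ => exp_pos _) univ_nonempty
  rw [log_div (exp_ne_zero _) hZ.ne', log_exp]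

theorem sum_mul_log_exp_div_sum_exp {Y : Type*} [Fintype Y] [Nonempty Y] (q s : Y → ℝ)
    (hq : ∑ y, q y = 1) :
    ∑ y, q y * log (exp (s y) / ∑ y', exp (s y')) =
      ∑ y, q y * s y - log (∑ y', exp (s y')) := by
  simp only [log_exp_div_sum_exp, mul_sub, sum_sub_distrib, ← sum_mul, hq, one_mul]

theorem dual_eq_test_loglik_of_mul_eq_mul {X Y : Type*} [Fintype X] [Fintype Y] [Nonempty Y]
    (ptrain ptest : X → ℝ) (pcond : X → Y → ℝ) (hcond_sum : ∀ x, ∑ y, pcond x y = 1)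
    (s t : X → Y → ℝ) (hst : ∀ x y, ptest x * s x y = ptrain x * t x y) :
    ∑ x, ∑ y, ptrain x * pcond x y * t x y - ∑ x, ptest x * log (∑ y', exp (s x y')) =
      ∑ x, ∑ y, ptest x * pcond x y * log (exp (s x y) / ∑ y', exp (s x y')) := by
  rw [← sum_sub_distrib]
  refine sum_congr rfl fun x _ => ?_
  calc ∑ y, ptrain x * pcond x y * t x y - ptest x * log (∑ y', exp (s x y'))
      = ptest x * (∑ y, pcond x y * s x y - log (∑ y', exp (s x y'))) := by
        rw [mul_sub, mul_sum]
        congr 1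
        exact sum_congr rfl fun y _ => by linear_combination (-pcond x y) * hst x y
    _ = ∑ y, ptest x * pcond x y * log (exp (s x y) / ∑ y', exp (s x y')) := by
        rw [← sum_mul_log_exp_div_sum_exp _ _ (hcond_sum x), mul_sum]
        simp only [mul_assoc]

theorem mul_add_div_mul_eq_mul {V : Type*} [Fintype V] {p q : ℝ} (hp : p ≠ 0) (hq : q ≠ 0)
    (c a : V → ℝ) (b : ℝ) :
    q * (∑ v, c v * a v + p / q * b) = p * (∑ v, c v / (p / q) * a v + b) := by
  simp only [mul_add, mul_sum]
  congr 1
  · refine sum_congr rfl fun v _ => ?_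
    field_simp
  · field_simp

theorem robust_multiview_dual_equals_test_loglik_general
    {X Y Vg Vo : Type*} [Fintype X] [Fintype Y] [Fintype Vg] [Fintype Vo]
    [Nonempty Y]
    (ptrain ptest : X → ℝ)
    (htrain_pos : ∀ x, 0 < ptrain x)
    (htest_pos : ∀ x, 0 < ptest x)
    (pcond : X → Y → ℝ)
    (hcond_sum : ∀ x, ∑ y, pcond x y = 1)
    -- generalized views
    (Xg : Vg → Type*)
    (πg : (v : Vg) → X → Xg v)
    (dg : Vg → ℕ)
    (φg : (v : Vg) → Xg v → Y → Fin (dg v) → ℝ)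
    -- non-generalized views
    (Xo : Vo → Type*)
    (πo : (v : Vo) → X → Xo v)
    (do_ : Vo → ℕ)
    (φo : (v : Vo) → Xo v → Y → Fin (do_ v) → ℝ)
    -- view marginals and density ratios ρ_v, ρ, r_v
    (ρv : Vg → X → ℝ)
    (ρ : X → ℝ) (hρ : ∀ x, ρ x = ptrain x / ptest x)
    (r : Vg → X → ℝ) (hr : ∀ v x, r v x = ρv v x / ρ x)
    -- partition function and softmax model, as functions of θ = (θg, θo)
    (Z : (((v : Vg) → Fin (dg v) → ℝ) × ((v : Vo) → Fin (do_ v) → ℝ)) → X → ℝ)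
    (hZ : ∀ θ x, Z θ x = ∑ y', Real.exp
      ((∑ v, ρv v x * ∑ i, θ.1 v i * φg v (πg v x) y' i) +
        ρ x * ∑ v', ∑ i, θ.2 v' i * φo v' (πo v' x) y' i))
    (Phat : (((v : Vg) → Fin (dg v) → ℝ) × ((v : Vo) → Fin (do_ v) → ℝ)) →
      X → Y → ℝ)
    (hPhat : ∀ θ x y, Phat θ x y =
      Real.exp ((∑ v, ρv v x * ∑ i, θ.1 v i * φg v (πg v x) y i) +
        ρ x * ∑ v', ∑ i, θ.2 v' i * φo v' (πo v' x) y i) / Z θ x)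
    -- the Lagrangian dual objective
    (D : (((v : Vg) → Fin (dg v) → ℝ) × ((v : Vo) → Fin (do_ v) → ℝ)) → ℝ)
    (hD : ∀ θ, D θ =
      (∑ x, ∑ y, ptrain x * pcond x y *
        ((∑ v, r v x * ∑ i, θ.1 v i * φg v (πg v x) y i) +
          ∑ v', ∑ i, θ.2 v' i * φo v' (πo v' x) y i)) -
        ∑ x, ptest x * Real.log (Z θ x))
    -- the testing conditional log-likelihood
    (Ltest : (((v : Vg) → Fin (dg v) → ℝ) × ((v : Vo) → Fin (do_ v) → ℝ)) → ℝ)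
    (hLtest : ∀ θ, Ltest θ =
      ∑ x, ∑ y, ptest x * pcond x y * Real.log (Phat θ x y)) :
    (∀ θ, D θ = Ltest θ) ∧
      {θ | ∀ θ', D θ' ≤ D θ} = {θ | ∀ θ', Ltest θ' ≤ Ltest θ} := by
  have hD_eq_Ltest : ∀ θ, D θ = Ltest θ := by
    intro θ
    rw [hD, hLtest]
    simp only [hPhat, hZ, hr, hρ]
    exact dual_eq_test_loglik_of_mul_eq_mul ptrain ptest pcond hcond_sum _ _ fun x y =>
      mul_add_div_mul_eq_mul (htrain_pos x).ne' (htest_pos x).ne' _ _ _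
  exact ⟨hD_eq_Ltest, by simp only [hD_eq_Ltest]⟩

/-- Theorem 3 of the paper: the Lagrangian dual objective of the
robust multiview covariate shift classifier equals, for every parameter
`θ = (θg, θo)`, the conditional log-likelihood of the testing distribution
under the softmax model `P̂_θ`; consequently the two objectives have the same
set of maximizers, i.e. the parameters of the robust multiview covariate shift
classifier are obtained by implicitly maximizing the testing conditional
likelihood. -/
theorem robust_multiview_dual_equals_test_loglik
    {X Y Vg Vo : Type*} [Fintype X] [Fintype Y] [Fintype Vg] [Fintype Vo]
    [Nonempty X] [Nonempty Y]
    (ptrain ptest : X → ℝ)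
    (htrain_pos : ∀ x, 0 < ptrain x) (htrain_sum : ∑ x, ptrain x = 1)
    (htest_pos : ∀ x, 0 < ptest x) (htest_sum : ∑ x, ptest x = 1)
    (pcond : X → Y → ℝ)
    (hcond_nonneg : ∀ x y, 0 ≤ pcond x y) (hcond_sum : ∀ x, ∑ y, pcond x y = 1)
    -- generalized views
    (Xg : Vg → Type*) [∀ v, Fintype (Xg v)] [∀ v, DecidableEq (Xg v)]
    (πg : (v : Vg) → X → Xg v)
    (dg : Vg → ℕ)
    (φg : (v : Vg) → Xg v → Y → Fin (dg v) → ℝ)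
    -- non-generalized views
    (Xo : Vo → Type*) [∀ v, Fintype (Xo v)] [∀ v, DecidableEq (Xo v)]
    (πo : (v : Vo) → X → Xo v)
    (do_ : Vo → ℕ)
    (φo : (v : Vo) → Xo v → Y → Fin (do_ v) → ℝ)
    -- view marginals and density ratios ρ_v, ρ, r_v
    (mtrain mtest : (v : Vg) → X → ℝ)
    (hmtrain : ∀ v x, mtrain v x =
      ∑ x' ∈ Finset.univ.filter (fun x' => πg v x' = πg v x), ptrain x')
    (hmtest : ∀ v x, mtest v x =
      ∑ x' ∈ Finset.univ.filter (fun x' => πg v x' = πg v x), ptest x')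
    (hmtrain_pos : ∀ v x, 0 < mtrain v x) (hmtest_pos : ∀ v x, 0 < mtest v x)
    (ρv : Vg → X → ℝ) (hρv : ∀ v x, ρv v x = mtrain v x / mtest v x)
    (ρ : X → ℝ) (hρ : ∀ x, ρ x = ptrain x / ptest x)
    (r : Vg → X → ℝ) (hr : ∀ v x, r v x = ρv v x / ρ x)
    -- partition function and softmax model, as functions of θ = (θg, θo)
    (Z : (((v : Vg) → Fin (dg v) → ℝ) × ((v : Vo) → Fin (do_ v) → ℝ)) → X → ℝ)
    (hZ : ∀ θ x, Z θ x = ∑ y', Real.exp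
      ((∑ v, ρv v x * ∑ i, θ.1 v i * φg v (πg v x) y' i) +
        ρ x * ∑ v', ∑ i, θ.2 v' i * φo v' (πo v' x) y' i))
    (Phat : (((v : Vg) → Fin (dg v) → ℝ) × ((v : Vo) → Fin (do_ v) → ℝ)) →
      X → Y → ℝ)
    (hPhat : ∀ θ x y, Phat θ x y =
      Real.exp ((∑ v, ρv v x * ∑ i, θ.1 v i * φg v (πg v x) y i) +
        ρ x * ∑ v', ∑ i, θ.2 v' i * φo v' (πo v' x) y i) / Z θ x)
    -- the Lagrangian dual objective
    (D : (((v : Vg) → Fin (dg v) → ℝ) × ((v : Vo) → Fin (do_ v) → ℝ)) → ℝ)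
    (hD : ∀ θ, D θ =
      (∑ x, ∑ y, ptrain x * pcond x y *
        ((∑ v, r v x * ∑ i, θ.1 v i * φg v (πg v x) y i) +
          ∑ v', ∑ i, θ.2 v' i * φo v' (πo v' x) y i)) -
        ∑ x, ptest x * Real.log (Z θ x))
    -- the testing conditional log-likelihood
    (Ltest : (((v : Vg) → Fin (dg v) → ℝ) × ((v : Vo) → Fin (do_ v) → ℝ)) → ℝ)
    (hLtest : ∀ θ, Ltest θ =
      ∑ x, ∑ y, ptest x * pcond x y * Real.log (Phat θ x y)) :
    (∀ θ, D θ = Ltest θ) ∧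
      {θ | ∀ θ', D θ' ≤ D θ} = {θ | ∀ θ', Ltest θ' ≤ Ltest θ} :=
  robust_multiview_dual_equals_test_loglik_general ptrain ptest htrain_pos htest_pos pcond hcond_sum
    Xg πg dg φg Xo πo do_ φo ρv ρ hρ r hr Z hZ Phat hPhat D hD Ltest hLtest
end

section
/- Let 𝒳 and 𝒴 be nonempty finite sets, p_train and p_test probability distributions on 𝒳 with p_train(x) > 0 and p_test(x) > 0 for every x, p(y|x) a conditional label distribution shared by training and testing (covariate shift), φ : 𝒳 × 𝒴 → ℝⁿ a feature map, and θ ∈ ℝⁿ. Define the standard softmax model P_θ(y|x) = exp(θ·φ(x,y)) / ∑_{y'} exp(θ·φ(x,y')). Then ∑_{x,y} p_train(x) p(y|x) (p_test(x)/p_train(x)) θ·φ(x,y) − ∑_x p_test(x) log ∑_{y'} exp(θ·φ(x,y')) = ∑_{x,y} p_train(x) p(y|x) (p_test(x)/p_train(x)) log P_θ(y|x). That is, when all features are assumed to generalize fully to the testing distribution (p_gen = p_test), the dual objective of the generalized robust covariate shift classifier equals the importance-weighted conditional log-likelihood of the training distribution, so the generalized robust covariate shift classifier is equivalent to the importance weighting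 method. -/
open Finset

/-- when all features generalize fully to the testing
distribution (`p_gen = p_test`), the dual objective of the generalized robust
covariate shift classifier equals the importance-weighted conditional
log-likelihood of the training distribution under the standard softmax model,
so the method reduces to importance weighting. -/
theorem robust_reduces_to_importance_weighting
    {X Y : Type*} [Fintype X] [Fintype Y] [Nonempty X] [Nonempty Y]
    (n : ℕ)
    (ptrain ptest : X → ℝ)
    (htrain_pos : ∀ x, 0 < ptrain x) (htrain_sum : ∑ x, ptrain x = 1)
    (htest_pos : ∀ x, 0 < ptest x) (htest_sum : ∑ x, ptest x = 1)
    (pcond : X → Y → ℝ)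
    (hcond_nonneg : ∀ x y, 0 ≤ pcond x y) (hcond_sum : ∀ x, ∑ y, pcond x y = 1)
    (φ : X → Y → Fin n → ℝ) (θ : Fin n → ℝ)
    -- the standard softmax (logistic regression) model
    (P : X → Y → ℝ)
    (hP : ∀ x y, P x y =
      Real.exp (∑ i, θ i * φ x y i) / ∑ y', Real.exp (∑ i, θ i * φ x y' i)) :
    ∑ x, ∑ y, ptrain x * pcond x y * (ptest x / ptrain x) * (∑ i, θ i * φ x y i) -
        ∑ x, ptest x * Real.log (∑ y', Real.exp (∑ i, θ i * φ x y' i)) =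
      ∑ x, ∑ y, ptrain x * pcond x y * (ptest x / ptrain x) * Real.log (P x y) := by
  have hZ : ∀ x : X, (0:ℝ) < ∑ y', Real.exp (∑ i, θ i * φ x y' i) := fun x =>
    Finset.sum_pos (fun y _ => Real.exp_pos _) Finset.univ_nonempty
  have hlog : ∀ x y, Real.log (P x y) =
      (∑ i, θ i * φ x y i) - Real.log (∑ y', Real.exp (∑ i, θ i * φ x y' i)) := by
    intro x y
    rw [hP x y, Real.log_div (Real.exp_ne_zero _) (ne_of_gt (hZ x)), Real.log_exp]
  have hw : ∀ x, ptrain x * (ptest x / ptrain x) = ptest x := fun x =>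
    mul_div_cancel₀ _ (ne_of_gt (htrain_pos x))
  calc ∑ x, ∑ y, ptrain x * pcond x y * (ptest x / ptrain x) * (∑ i, θ i * φ x y i) -
        ∑ x, ptest x * Real.log (∑ y', Real.exp (∑ i, θ i * φ x y' i))
      = ∑ x, ∑ y, (ptrain x * pcond x y * (ptest x / ptrain x) * (∑ i, θ i * φ x y i)
          - ptrain x * pcond x y * (ptest x / ptrain x) *
            Real.log (∑ y', Real.exp (∑ i, θ i * φ x y' i))) := by
        simp_rw [Finset.sum_sub_distrib]
        congr 1
        apply Finset.sum_congr rfl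
        intro x _
        rw [← Finset.sum_mul]
        congr 1
        have : ∀ y, ptrain x * pcond x y * (ptest x / ptrain x)
            = ptest x * pcond x y := by
          intro y; rw [mul_right_comm, hw x]
        simp_rw [this, ← Finset.mul_sum, hcond_sum x, mul_one]
    _ = ∑ x, ∑ y, ptrain x * pcond x y * (ptest x / ptrain x) * Real.log (P x y) := by
        apply Finset.sum_congr rfl; intro x _
        apply Finset.sum_congr rfl; intro y _
        rw [hlog x y, mul_sub]
end
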